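/- Let Γ be a group, I a finite nonempty index type, and {Γ_i}_{i∈I} a family of subgroups of Γ. Let S := Γ × I and let π : S → Σ_{i∈I} (Γ ⧸ Γ_i) be the map (g, i) ↦ (i, gΓ_i). Call a pair (x₀, x₁) ∈ S × S degenerate if π(x₀) = π(x₁), and a triple (x₀, x₁, x₂) ∈ S × S × S degenerate if π(x₀) = π(x₁) = π(x₂). Let ∂ : ((S×S×S) →₀ ℝ) → ((S×S) →₀ ℝ) be the linear map sending the indicator of (x₀,x₁,x₂) to (x₁,x₂) − (x₀,x₂) + (x₀,x₁) (indicators), and let D₁ ⊆ (S×S) →₀ ℝ be the linear span of the indicators of degenerate pairs. Then for every b : (S×S) →₀ ℝ which is supported on non-degenerate pairs and satisfies ∑_{(x₀,x₁)} b(x₀,x₁)·(indicator of π(x₁) − indicator of π(x₀)) = 0 in (Σ_{i∈I} Γ ⧸ Γ_i) →₀ ℝ, there exists a : (S×S×S) →₀ ℝ such that ∂a − b ∈ D₁ and the restriction a' of a to non-degenerate triples satisfies ‖a'‖₁ ≤ 3‖b‖₁. -/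

import Mathlib

open scoped Classical

/-- The `ℓ¹` norm of a finitely supported real function. -/
noncomputable def l1Norm {T : Type} (c : T →₀ ℝ) : ℝ :=
  ∑ t ∈ c.support, |c t|

variable {Γ : Type} [Group Γ] {I : Type}

/-- The projection `Γ × I → Σ i, Γ ⧸ Γᵢ`, `(g, i) ↦ (i, gΓᵢ)`. -/
def cosetProj (H : I → Subgroup Γ) : Γ × I → Σ i : I, Γ ⧸ H i :=
  fun x => ⟨x.2, QuotientGroup.mk x.1⟩

/-- The boundary map `∂ : C₂ → C₁` on the free real vector space over triples, sending the
indicator of `(x₀, x₁, x₂)` to `(x₁,x₂) − (x₀,x₂) + (x₀,x₁)` (indicators). -/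
noncomputable def bdryTwo (Γ I : Type) :
    (((Γ × I) × (Γ × I) × (Γ × I)) →₀ ℝ) →ₗ[ℝ] (((Γ × I) × (Γ × I)) →₀ ℝ) :=
  Finsupp.linearCombination ℝ fun t : (Γ × I) × (Γ × I) × (Γ × I) =>
    Finsupp.single (t.2.1, t.2.2) (1 : ℝ) - Finsupp.single (t.1, t.2.2) (1 : ℝ)
      + Finsupp.single (t.1, t.2.1) (1 : ℝ)

/-- The augmentation `C₁ → ℝ(Γ/Γ')`, sending the indicator of `(x₀, x₁)` to
`(indicator of π x₁) − (indicator of π x₀)`. -/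
noncomputable def augOne (H : I → Subgroup Γ) :
    (((Γ × I) × (Γ × I)) →₀ ℝ) →ₗ[ℝ] ((Σ i : I, Γ ⧸ H i) →₀ ℝ) :=
  Finsupp.linearCombination ℝ fun p : (Γ × I) × (Γ × I) =>
    Finsupp.single (cosetProj H p.2) (1 : ℝ) - Finsupp.single (cosetProj H p.1) (1 : ℝ)

/-- The span of the indicators of degenerate pairs (both vertices in the same coset). -/
noncomputable def degenPairs (H : I → Subgroup Γ) :
    Submodule ℝ (((Γ × I) × (Γ × I)) →₀ ℝ) :=
  Submodule.span ℝ
    {f | ∃ p : (Γ × I) × (Γ × I), cosetProj H p.1 = cosetProj H p.2 ∧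
      f = Finsupp.single p (1 : ℝ)}

/-!
Fix a base point `x` and a representative `r c` of every coset `c`. Cone each pair `(y, z)` off
`x` as the triple `[x, y, z]`, corrected by `[x, r(πy), y] − [x, r(πz), z]`. The boundary of this
cone is `(y, z)` plus the degenerate pairs `(r(πy), y) − (r(πz), z)` plus
`(x, r(πy)) − (x, r(πz))`; the last term depends on `(y, z)` only through its augmentation
`πz − πy`, so it cancels over a cycle. Each pair is coned by three triples, whence the factor `3`.
-/

section L1Norm

variable {T : Type}

lemma l1Norm_eq_sum_of_support_subset (c : T →₀ ℝ) {s : Finset T} (h : c.support ⊆ s) :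
    l1Norm c = ∑ t ∈ s, |c t| :=
  Finset.sum_subset h fun t _ ht => by simp [Finsupp.notMem_support_iff.mp ht]

lemma l1Norm_single (t : T) (c : ℝ) : l1Norm (Finsupp.single t c) = |c| := by
  simp [l1Norm_eq_sum_of_support_subset _ Finsupp.support_single_subset]

lemma l1Norm_smul (c : ℝ) (f : T →₀ ℝ) : l1Norm (c • f) = |c| * l1Norm f := by
  rw [l1Norm_eq_sum_of_support_subset (c • f) Finsupp.support_smul, l1Norm, Finset.mul_sum]
  simp [abs_mul]

lemma l1Norm_neg (f : T →₀ ℝ) : l1Norm (-f) = l1Norm f := by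
  simp [l1Norm, Finsupp.support_neg]

lemma l1Norm_add_le (f g : T →₀ ℝ) : l1Norm (f + g) ≤ l1Norm f + l1Norm g := by
  rw [l1Norm_eq_sum_of_support_subset (f + g) Finsupp.support_add,
    l1Norm_eq_sum_of_support_subset f Finset.subset_union_left,
    l1Norm_eq_sum_of_support_subset g Finset.subset_union_right, ← Finset.sum_add_distrib]
  exact Finset.sum_le_sum fun t _ => abs_add_le (f t) (g t)

lemma l1Norm_sub_le (f g : T →₀ ℝ) : l1Norm (f - g) ≤ l1Norm f + l1Norm g := by
  simpa [sub_eq_add_neg, l1Norm_neg] using l1Norm_add_le f (-g)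

lemma l1Norm_sum_le {ι : Type} (s : Finset ι) (f : ι → T →₀ ℝ) :
    l1Norm (∑ i ∈ s, f i) ≤ ∑ i ∈ s, l1Norm (f i) :=
  Finset.le_sum_of_subadditive l1Norm (by simp [l1Norm]) l1Norm_add_le s f

lemma l1Norm_filter_le (P : T → Prop) [DecidablePred P] (f : T →₀ ℝ) :
    l1Norm (f.filter P) ≤ l1Norm f := by
  rw [l1Norm_eq_sum_of_support_subset _ (Finset.filter_subset P f.support)]
  refine Finset.sum_le_sum fun t _ => ?_
  rw [Finsupp.filter_apply]
  split_ifs <;> simp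

lemma l1Norm_linearCombination_le {X : Type} {g : X → T →₀ ℝ} {C : ℝ}
    (hg : ∀ p, l1Norm (g p) ≤ C) (b : X →₀ ℝ) :
    l1Norm (Finsupp.linearCombination ℝ g b) ≤ C * l1Norm b :=
  calc l1Norm (Finsupp.linearCombination ℝ g b)
      ≤ ∑ p ∈ b.support, l1Norm (b p • g p) := l1Norm_sum_le _ _
    _ ≤ ∑ p ∈ b.support, C * |b p| := Finset.sum_le_sum fun p _ => by
        rw [l1Norm_smul, mul_comm]
        exact mul_le_mul_of_nonneg_right (hg p) (abs_nonneg _)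
    _ = C * l1Norm b := (Finset.mul_sum _ _ _).symm

end L1Norm

section RelativeCone

variable (H : I → Subgroup Γ)

noncomputable def cosetRep (c : Σ i : I, Γ ⧸ H i) : Γ × I := (c.2.out, c.1)

@[simp]
lemma cosetProj_cosetRep (c : Σ i : I, Γ ⧸ H i) : cosetProj H (cosetRep H c) = c := by
  obtain ⟨i, q⟩ := c
  simp [cosetProj, cosetRep]

lemma single_mem_degenPairs {y z : Γ × I} (h : cosetProj H y = cosetProj H z) (c : ℝ) :
    Finsupp.single (y, z) c ∈ degenPairs H := by
  rw [← mul_one c, ← smul_eq_mul, ← Finsupp.smul_single]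
  exact Submodule.smul_mem _ _ (Submodule.subset_span ⟨(y, z), h, rfl⟩)

variable (x : Γ × I)

noncomputable def coneCosetReps : ((Σ i : I, Γ ⧸ H i) →₀ ℝ) →ₗ[ℝ] (((Γ × I) × (Γ × I)) →₀ ℝ) :=
  Finsupp.lmapDomain ℝ ℝ fun c => (x, cosetRep H c)

noncomputable def conePair (p : (Γ × I) × (Γ × I)) : ((Γ × I) × (Γ × I) × (Γ × I)) →₀ ℝ :=
  Finsupp.single (x, p.1, p.2) 1 + Finsupp.single (x, cosetRep H (cosetProj H p.1), p.1) 1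
    - Finsupp.single (x, cosetRep H (cosetProj H p.2), p.2) 1

lemma bdryTwo_conePair (p : (Γ × I) × (Γ × I)) :
    bdryTwo Γ I (conePair H x p) = Finsupp.single p 1
      + (Finsupp.single (cosetRep H (cosetProj H p.1), p.1) 1
        - Finsupp.single (cosetRep H (cosetProj H p.2), p.2) 1)
      - coneCosetReps H x (augOne H (Finsupp.single p 1)) := by
  simp only [conePair, coneCosetReps, bdryTwo, augOne, map_add, map_sub,
    Finsupp.linearCombination_single, one_smul, Finsupp.lmapDomain_apply,
    Finsupp.mapDomain_single]
  abel

lemma l1Norm_conePair_le (p : (Γ × I) × (Γ × I)) : l1Norm (conePair H x p) ≤ 3 := by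
  unfold conePair
  refine (l1Norm_sub_le _ _).trans ((add_le_add_left (l1Norm_add_le _ _) _).trans ?_)
  norm_num [l1Norm_single]

noncomputable def relCone :
    (((Γ × I) × (Γ × I)) →₀ ℝ) →ₗ[ℝ] (((Γ × I) × (Γ × I) × (Γ × I)) →₀ ℝ) :=
  Finsupp.linearCombination ℝ (conePair H x)

lemma l1Norm_relCone_le (b : ((Γ × I) × (Γ × I)) →₀ ℝ) : l1Norm (relCone H x b) ≤ 3 * l1Norm b :=
  l1Norm_linearCombination_le (l1Norm_conePair_le H x) b

lemma bdryTwo_relCone_sub_add_mem_degenPairs (b : ((Γ × I) × (Γ × I)) →₀ ℝ) :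
    bdryTwo Γ I (relCone H x b) - b
      + coneCosetReps H x (augOne H b) ∈ degenPairs H := by
  let φ := bdryTwo Γ I ∘ₗ relCone H x - LinearMap.id
    + coneCosetReps H x ∘ₗ augOne H
  change φ b ∈ degenPairs H
  induction b using Finsupp.induction_linear with
  | zero => simp
  | add f g hf hg => simpa using add_mem hf hg
  | single p c =>
    rw [← mul_one c, ← smul_eq_mul, ← Finsupp.smul_single, map_smul]
    refine Submodule.smul_mem _ _ ?_
    simp only [φ, relCone, LinearMap.add_apply, LinearMap.sub_apply, LinearMap.comp_apply,
      Finsupp.linearCombination_single, one_smul, bdryTwo_conePair, LinearMap.id_apply]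
    convert sub_mem (single_mem_degenPairs H (cosetProj_cosetRep H (cosetProj H p.1)) 1)
      (single_mem_degenPairs H (cosetProj_cosetRep H (cosetProj H p.2)) 1) using 1
    abel

end RelativeCone

theorem relative_cone_general (H : I → Subgroup Γ) [Nonempty I]
    (b : ((Γ × I) × (Γ × I)) →₀ ℝ)
    (hcycle : augOne H b = 0) :
    ∃ a : ((Γ × I) × (Γ × I) × (Γ × I)) →₀ ℝ,
      bdryTwo Γ I a - b ∈ degenPairs H ∧
      l1Norm (a.filter fun t =>
          ¬(cosetProj H t.1 = cosetProj H t.2.1 ∧ cosetProj H t.2.1 = cosetProj H t.2.2))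
        ≤ 3 * l1Norm b := by
  let x : Γ × I := (1, Classical.arbitrary I)
  refine ⟨relCone H x b, ?_, (l1Norm_filter_le _ _).trans (l1Norm_relCone_le H x b)⟩
  simpa [hcycle] using bdryTwo_relCone_sub_add_mem_degenPairs H x b

/-- the relative cone of Mineyev–Yaman: for a group-pair `(Γ, {Γᵢ}_{i∈I})`
with `I` finite and nonempty, every `1`-chain `b` supported on non-degenerate pairs which is
a cycle for the augmentation to `ℝ(Γ/Γ')` admits a `2`-chain `a` with `∂a ≡ b` modulo
degenerate pairs, whose restriction to non-degenerate triples has `ℓ¹` norm at most `3‖b‖₁`. -/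
theorem relative_cone (H : I → Subgroup Γ) [Fintype I] [Nonempty I]
    (b : ((Γ × I) × (Γ × I)) →₀ ℝ)
    (hsupp : ∀ p ∈ b.support, cosetProj H p.1 ≠ cosetProj H p.2)
    (hcycle : augOne H b = 0) :
    ∃ a : ((Γ × I) × (Γ × I) × (Γ × I)) →₀ ℝ,
      bdryTwo Γ I a - b ∈ degenPairs H ∧
      l1Norm (a.filter fun t =>
          ¬(cosetProj H t.1 = cosetProj H t.2.1 ∧ cosetProj H t.2.1 = cosetProj H t.2.2))
        ≤ 3 * l1Norm b :=
  relative_cone_general H b hcycle
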